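/- arXiv:1201.6012 — 2 statements merged into one kernel-verified Lean document; each statement's English description precedes it below -/
import Mathlib

section
/- Let q be a prime power such that either F_q has characteristic 2 or q ≡ 1 (mod 4), let m be a positive integer coprime to q, and let R = F_q[Y]/(Y^m − 1). Then there exists a Hermitian self-dual linear code over R of length ℓ if and only if ℓ is even. -/
/-!
Setting `Y = 1` sends a self-dual code `C ⊆ R^ℓ` to a code `W ⊆ F^ℓ` that is self-dual for the
dot product. `W` is self-orthogonal because conjugation is trivial at `Y = 1`. For `W^⊥ ⊆ W`,
lift `v ⊥ W` to `(v_j · conj N)_j` with `N = 1 + Y + ⋯ + Y^{m-1}`: since `Y N = N`, its pairing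
with `x ∈ C` is `(x(1) ⬝ v) N = 0`, so the lift lies in `C^⊥ = C`, and it reduces to `m • v`
with `m` invertible in `F`. Hence `ℓ = 2 dim W`. Conversely, for `ℓ = 2k` the hypothesis
on `q` provides `c ∈ F` with `c² = -1`, and the graph `{(a, c a) : a ∈ R^k}` is self-dual.
-/

open Polynomial

noncomputable section

/-- The ring `R = F_q[Y]/(Y^m − 1)`. -/
abbrev Rq (F : Type) [Field F] (m : ℕ) := AdjoinRoot ((X : F[X]) ^ m - 1)

lemma root_pow_eq_one (F : Type) [Field F] (m : ℕ) :
    (AdjoinRoot.root ((X : F[X]) ^ m - 1)) ^ m = 1 := by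
  have h : (aeval (AdjoinRoot.root ((X : F[X]) ^ m - 1)) ((X : F[X]) ^ m - 1)) = 0 := by
    rw [AdjoinRoot.aeval_eq, AdjoinRoot.mk_self]
  simp only [map_sub, map_pow, aeval_X, map_one, sub_eq_zero] at h
  exact h

/-- Conjugation on `R`: the `F`-algebra map determined by `Y ↦ Y^{m−1} (= Y⁻¹)`. -/
noncomputable def conjR (F : Type) [Field F] (m : ℕ) : Rq F m →ₐ[F] Rq F m :=
  AdjoinRoot.liftAlgHom _ (Algebra.ofId F _) ((AdjoinRoot.root ((X : F[X]) ^ m - 1)) ^ (m - 1)) (by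
    change aeval _ ((X : F[X]) ^ m - 1) = 0
    simp only [map_sub, map_pow, aeval_X, map_one, sub_eq_zero, ← pow_mul]
    rw [mul_comm, pow_mul, root_pow_eq_one, one_pow])

/-- The Hermitian inner product `⟨x,y⟩ = Σ_j x_j ⬝ conj(y_j)` on `R^n`. -/
def herm (F : Type) [Field F] (m : ℕ) {n : ℕ} (x y : Fin n → Rq F m) : Rq F m :=
  ∑ j, x j * conjR F m (y j)

/-- A linear code `C ⊆ R^n` is Hermitian self-dual if `C = C^⊥`, i.e. membership in `C`
coincides with orthogonality to all of `C`. -/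
def IsHermSelfDual (F : Type) [Field F] (m : ℕ) {n : ℕ}
    (C : Submodule (Rq F m) (Fin n → Rq F m)) : Prop :=
  ∀ y, y ∈ C ↔ ∀ x ∈ C, herm F m x y = 0

section QuotientRing

variable {F : Type} [Field F] {m : ℕ}

lemma conjR_root : conjR F m (AdjoinRoot.root _) = AdjoinRoot.root _ ^ (m - 1) :=
  AdjoinRoot.liftAlgHom_root _ _ _ _

lemma root_mul_conjR_root (hm : 0 < m) :
    (AdjoinRoot.root _ : Rq F m) * conjR F m (AdjoinRoot.root _) = 1 := by
  rw [conjR_root, mul_pow_sub_one hm.ne', root_pow_eq_one]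

lemma conjR_involutive (hm : 0 < m) : Function.Involutive (conjR F m) := by
  suffices (conjR F m).comp (conjR F m) = AlgHom.id F _ from fun z => DFunLike.congr_fun this z
  refine AdjoinRoot.algHom_ext ?_
  have h := congrArg (conjR F m) (root_mul_conjR_root (F := F) hm)
  rw [map_mul, map_one] at h
  exact (left_inv_eq_right_inv (root_mul_conjR_root hm) h).symm

def evalOne (F : Type) [Field F] (m : ℕ) : Rq F m →ₐ[F] F :=
  AdjoinRoot.liftAlgHom _ (Algebra.ofId F F) 1 (by simp)

lemma evalOne_root : evalOne F m (AdjoinRoot.root _) = 1 :=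
  AdjoinRoot.liftAlgHom_root _ _ _ _

lemma evalOne_mk (p : F[X]) : evalOne F m (AdjoinRoot.mk _ p) = p.eval 1 := by
  simp [evalOne, AdjoinRoot.liftAlgHom_mk, eval₂_eq_eval_map]

lemma evalOne_conjR (z : Rq F m) : evalOne F m (conjR F m z) = evalOne F m z := by
  suffices (evalOne F m).comp (conjR F m) = evalOne F m from DFunLike.congr_fun this z
  refine AdjoinRoot.algHom_ext ?_
  rw [AlgHom.comp_apply, conjR_root, map_pow, evalOne_root, one_pow]

lemma mul_eq_evalOne_smul_of_root_mul {t : Rq F m} (ht : AdjoinRoot.root _ * t = t)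
    (z : Rq F m) : z * t = evalOne F m z • t := by
  induction z using AdjoinRoot.induction_on with
  | ih p =>
    obtain ⟨r, hr⟩ := X_sub_C_dvd_sub_C_eval (a := (1 : F)) (p := p)
    have hker : (AdjoinRoot.root _ - 1) * t = 0 := by rw [sub_mul, ht, one_mul, sub_self]
    rw [evalOne_mk, ← sub_eq_zero, Algebra.smul_def, ← sub_mul, AdjoinRoot.algebraMap_eq,
      ← AdjoinRoot.mk_C, ← map_sub, hr, map_mul, map_sub, AdjoinRoot.mk_X, C_1, map_one,
      mul_right_comm, hker, zero_mul]

def rootPowSum (F : Type) [Field F] (m : ℕ) : Rq F m :=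
  ∑ i ∈ Finset.range m, AdjoinRoot.root _ ^ i

lemma root_mul_rootPowSum : AdjoinRoot.root _ * rootPowSum F m = rootPowSum F m := by
  have h := geom_sum_mul (AdjoinRoot.root ((X : F[X]) ^ m - 1)) m
  rw [root_pow_eq_one, sub_self, mul_sub, mul_one, sub_eq_zero] at h
  rw [rootPowSum, mul_comm, h]

lemma evalOne_rootPowSum : evalOne F m (rootPowSum F m) = m := by
  simp [rootPowSum, evalOne_root]

end QuotientRing

section LinearAlgebra

open Module LinearMap.BilinForm

lemma dotProductBilin_nondegenerate {K ι : Type*} [CommSemiring K] [Fintype ι] :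
    (dotProductBilin K K : LinearMap.BilinForm K (ι → K)).Nondegenerate :=
  ⟨fun v hv => dotProduct_eq_zero v hv,
    fun w hw => dotProduct_eq_zero w fun v => by rw [dotProduct_comm]; exact hw v⟩

theorem even_finrank_of_orthogonal_eq_self {K V : Type*} [Field K] [AddCommGroup V] [Module K V]
    [FiniteDimensional K V] {B : LinearMap.BilinForm K V} (hB : B.Nondegenerate)
    {W : Submodule K V} (hW : B.orthogonal W = W) : Even (finrank K V) := by
  have h := finrank_orthogonal hB W
  rw [hW] at h
  have := Submodule.finrank_le W
  exact ⟨finrank K W, by omega⟩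

end LinearAlgebra

lemma natCast_ne_zero_of_coprime_card {F : Type} [Field F] [Fintype F] {m : ℕ}
    (hcop : Nat.Coprime m (Fintype.card F)) : (m : F) ≠ 0 := by
  have h := (Nat.isCoprime_iff_coprime.mpr hcop).map (Int.castRingHom F)
  simp only [eq_intCast, Int.cast_natCast, FiniteField.cast_card_eq_zero, isCoprime_zero_right] at h
  exact h.ne_zero

lemma isSquare_neg_one_of_ringChar_eq_two_or_card_mod_four {F : Type} [Field F] [Fintype F]
    (hq : ringChar F = 2 ∨ Fintype.card F % 4 = 1) : IsSquare (-1 : F) := by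
  rw [FiniteField.isSquare_neg_one_iff]
  rcases hq with h2 | h4
  · have := FiniteField.even_card_iff_char_two.mp h2
    omega
  · omega

section ReductionAtOne

variable {F : Type} [Field F] {m n : ℕ}

abbrev evalOneVec (F : Type) [Field F] (m n : ℕ) : (Fin n → Rq F m) →ₗ[F] (Fin n → F) :=
  (evalOne F m).toLinearMap.compLeft (Fin n)

lemma forall_herm_eq_zero_iff (hm : 0 < m) {z : Fin n → Rq F m} :
    (∀ x, herm F m x z = 0) ↔ z = 0 := by
  refine ⟨fun h => funext fun j => (conjR_involutive hm).injective ?_, fun h x => by simp [h, herm]⟩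
  simpa [herm, Pi.single_apply] using h (Pi.single j 1)

lemma evalOne_herm (x y : Fin n → Rq F m) :
    evalOne F m (herm F m x y) = evalOneVec F m n x ⬝ᵥ evalOneVec F m n y := by
  simp [herm, dotProduct, evalOne_conjR]

lemma herm_smul_conjR (hm : 0 < m) {t : Rq F m} (ht : AdjoinRoot.root _ * t = t)
    (x : Fin n → Rq F m) (v : Fin n → F) :
    herm F m x (fun j => v j • conjR F m t) = (evalOneVec F m n x ⬝ᵥ v) • t := by
  simp only [herm, map_smul, conjR_involutive hm t, dotProduct, Finset.sum_smul,
    LinearMap.compLeft_apply, Function.comp_apply, AlgHom.toLinearMap_apply]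
  refine Finset.sum_congr rfl fun j _ => ?_
  rw [mul_smul_comm, mul_eq_evalOne_smul_of_root_mul ht, smul_smul, mul_comm]

lemma evalOneVec_smul_conjR (v : Fin n → F) (t : Rq F m) :
    evalOneVec F m n (fun j => v j • conjR F m t) = evalOne F m t • v := by
  ext j
  simp [evalOne_conjR, mul_comm]

def reductionAtOne (C : Submodule (Rq F m) (Fin n → Rq F m)) : Submodule F (Fin n → F) :=
  (C.restrictScalars F).map (evalOneVec F m n)

theorem orthogonal_reductionAtOne (hm : 0 < m) (hm0 : (m : F) ≠ 0)
    {C : Submodule (Rq F m) (Fin n → Rq F m)} (hC : IsHermSelfDual F m C) :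
    LinearMap.BilinForm.orthogonal (dotProductBilin F F) (reductionAtOne C) = reductionAtOne C := by
  ext v
  rw [LinearMap.BilinForm.mem_orthogonal_iff]
  constructor
  · intro hv
    have hlift : (fun j => v j • conjR F m (rootPowSum F m)) ∈ C := (hC _).2 fun x hx => by
      rw [herm_smul_conjR hm root_mul_rootPowSum, ← dotProductBilin_apply_apply (R := F) (S := F),
        hv _ ⟨x, hx, rfl⟩, zero_smul]
    have hmv : (m : F) • v ∈ reductionAtOne C := by
      rw [← evalOne_rootPowSum, ← evalOneVec_smul_conjR]
      exact ⟨_, hlift, rfl⟩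
    exact (Submodule.smul_mem_iff _ hm0).mp hmv
  · rintro ⟨y, hy, rfl⟩ _ ⟨x, hx, rfl⟩
    rw [dotProductBilin_apply_apply, ← evalOne_herm, (hC y).mp hy x hx, map_zero]

end ReductionAtOne

def graphCode {R : Type*} [CommRing R] (c : R) (k : ℕ) : Submodule R (Fin (k + k) → R) where
  carrier := {y | ∀ i, y (Fin.natAdd k i) = c * y (Fin.castAdd k i)}
  add_mem' ha hb i := by simp only [Pi.add_apply, ha i, hb i, mul_add]
  zero_mem' _ := by simp
  smul_mem' r y hy i := by simp only [Pi.smul_apply, smul_eq_mul, hy i, mul_left_comm]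

lemma append_mem_graphCode {R : Type*} [CommRing R] {c : R} {k : ℕ} {a b : Fin k → R} :
    Fin.append a b ∈ graphCode c k ↔ b = c • a := by
  simp only [graphCode, Submodule.mem_mk, AddSubmonoid.mem_mk, AddSubsemigroup.mem_mk,
    Set.mem_ofPred_eq, Fin.append_left, Fin.append_right, funext_iff, Pi.smul_apply, smul_eq_mul]

section GraphCode

variable {F : Type} [Field F] {m k : ℕ}

lemma herm_append (a b a' b' : Fin k → Rq F m) :
    herm F m (Fin.append a b) (Fin.append a' b') = herm F m a a' + herm F m b b' := by
  simp only [herm, Fin.sum_univ_add, Fin.append_left, Fin.append_right]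

lemma herm_append_smul {c : Rq F m} (hc : conjR F m c = c) (a a' b' : Fin k → Rq F m) :
    herm F m (Fin.append a (c • a)) (Fin.append a' b') = herm F m a (a' + c • b') := by
  rw [herm_append, herm, herm, herm, ← Finset.sum_add_distrib]
  refine Finset.sum_congr rfl fun j _ => ?_
  simp only [Pi.add_apply, Pi.smul_apply, smul_eq_mul, map_add, map_mul, hc]
  ring

theorem isHermSelfDual_graphCode (hm : 0 < m) {c : Rq F m} (hc : c * c = -1)
    (hcc : conjR F m c = c) : IsHermSelfDual F m (graphCode c k) := by
  intro y
  obtain ⟨a, b, rfl⟩ : ∃ a b, y = Fin.append a b := ⟨_, _, Fin.append_castAdd_natAdd.symm⟩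
  have hdual : (∀ x ∈ graphCode c k, herm F m x (Fin.append a b) = 0) ↔ a + c • b = 0 := by
    rw [← forall_herm_eq_zero_iff hm]
    constructor
    · intro h a'
      rw [← herm_append_smul hcc]
      exact h _ (append_mem_graphCode.mpr rfl)
    · intro h x hx
      obtain ⟨a', b', rfl⟩ : ∃ a' b', x = Fin.append a' b' := ⟨_, _, Fin.append_castAdd_natAdd.symm⟩
      obtain rfl := append_mem_graphCode.mp hx
      rw [herm_append_smul hcc]
      exact h a'
  rw [append_mem_graphCode, hdual]
  constructor
  · rintro rfl
    rw [smul_smul, hc, neg_one_smul, add_neg_cancel]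
  · intro h
    calc b = c • -(c • b) := by rw [smul_neg, smul_smul, hc, neg_one_smul, neg_neg]
      _ = c • a := by rw [eq_neg_of_add_eq_zero_left h]

end GraphCode

/-- There exists a Hermitian self-dual linear code over `R = F_q[Y]/(Y^m − 1)` of
length `ℓ` iff `ℓ` is even (char 2 or `q ≡ 1 (mod 4)` case). -/
theorem statement0 (F : Type) [Field F] [Fintype F]
    (hq : ringChar F = 2 ∨ Fintype.card F % 4 = 1)
    (m : ℕ) (hm : 0 < m) (hcop : Nat.Coprime m (Fintype.card F)) (ℓ : ℕ) :
    (∃ C : Submodule (Rq F m) (Fin ℓ → Rq F m), IsHermSelfDual F m C) ↔ Even ℓ := by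
  constructor
  · rintro ⟨C, hC⟩
    have hW := orthogonal_reductionAtOne hm (natCast_ne_zero_of_coprime_card hcop) hC
    simpa using even_finrank_of_orthogonal_eq_self dotProductBilin_nondegenerate hW
  · rintro ⟨k, rfl⟩
    obtain ⟨c, hc⟩ := isSquare_neg_one_of_ringChar_eq_two_or_card_mod_four hq
    refine ⟨graphCode (algebraMap F (Rq F m) c) k, isHermSelfDual_graphCode hm ?_ ?_⟩
    · rw [← map_mul, ← hc, map_neg, map_one]
    · exact (conjR F m).commutes c
end
end

section
/- Let p be a prime and let C ⊆ F_2^{pℓ} be a binary ℓ-quasi-cyclic self-dual code of length pℓ, i.e., a binary self-dual linear code invariant under T^ℓ, where T is the cyclic coordinate shift. For each i, let A_i be the number of codewords of C of Hamming weight i. If p does not divide i, then p divides A_i. In particular, if d is the minimum weight of C and p does not divide d, then p divides A_d. -/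
noncomputable section

/-- A linear code `C ⊆ K^n` is (Euclidean) self-dual if `C = C^⊥`. -/
def IsSelfDualCode (K : Type) [Field K] {n : ℕ} (C : Submodule K (Fin n → K)) : Prop :=
  ∀ y, y ∈ C ↔ ∀ x ∈ C, ∑ j, x j * y j = 0

/-- `C` is `ℓ`-quasi-cyclic: `T^ℓ(C) = C`, where `T` is the cyclic coordinate shift
sending `(c_0, …, c_{n−1})` to `(c_{n−1}, c_0, …, c_{n−2})`, i.e. `(T v) j = v (j − 1)`. -/
def IsQuasiCyclic (K : Type) [Field K] {n : ℕ} (ℓ : ℕ) (C : Submodule K (Fin n → K)) : Prop :=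
  ∀ v, v ∈ C ↔ (v ∘ ⇑((finRotate n)⁻¹ ^ ℓ)) ∈ C

/-- `C` has minimum (nonzero Hamming) weight `d`. -/
def HasMinWeight (K : Type) [Field K] [DecidableEq K] {n : ℕ}
    (C : Submodule K (Fin n → K)) (d : ℕ) : Prop :=
  IsLeast {w | ∃ v ∈ C, v ≠ 0 ∧ hammingNorm v = w} d

/-- `C` and `D` are permutation equivalent. -/
def PermEquiv (K : Type) [Field K] {n : ℕ} (C D : Submodule K (Fin n → K)) : Prop :=
  ∃ σ : Equiv.Perm (Fin n), ∀ v, v ∈ C ↔ (v ∘ ⇑σ) ∈ D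

/-- `C` and `D` are monomially equivalent: one is obtained from the other by permuting
coordinates and multiplying each coordinate by a nonzero scalar. -/
def MonomialEquiv (K : Type) [Field K] {n : ℕ} (C D : Submodule K (Fin n → K)) : Prop :=
  ∃ (σ : Equiv.Perm (Fin n)) (s : Fin n → K), (∀ j, s j ≠ 0) ∧
    ∀ v, v ∈ C ↔ (fun j => s j * v (σ j)) ∈ D

/-- There are exactly `N` codes satisfying `P`, up to permutation equivalence. -/
def ExactlyNUpToPerm (K : Type) [Field K] {n : ℕ} (N : ℕ)
    (P : Submodule K (Fin n → K) → Prop) : Prop :=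
  ∃ f : Fin N → Submodule K (Fin n → K),
    (∀ i, P (f i)) ∧
    (∀ i j, i ≠ j → ¬ PermEquiv K (f i) (f j)) ∧
    (∀ C, P C → ∃ i, PermEquiv K C (f i))

/-!
The shift `π = T^{-ℓ}` satisfies `π^p = 1` and, since `0 < ℓ < pℓ`, fixes no coordinate. A group of
prime order `p` acting without fixed points has all orbits of size `p`. Applied to the support of a
`π`-invariant vector this shows its weight is divisible by `p`; so when `p ∤ i`, precomposition with
`π` acts without fixed points on the codewords of weight `i`, and `p ∣ A_i`.
-/

namespace Equiv.Perm

variable {α : Type*} {p : ℕ} [Fact p.Prime]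

theorem prime_dvd_card_of_pow_eq_one_of_forall_ne [Fintype α] [DecidableEq α] {σ : Perm α}
    (hσ : σ ^ p = 1) (hfix : ∀ x, σ x ≠ x) : p ∣ Fintype.card α := by
  have hmod := card_compl_support_modEq (n := 1) (by rwa [pow_one])
  rw [Finset.eq_univ_of_forall fun x => mem_support.mpr (hfix x), Finset.compl_univ,
    Finset.card_empty] at hmod
  exact Nat.modEq_zero_iff_dvd.mp hmod.symm

theorem prime_dvd_ncard_of_pow_eq_one_of_forall_ne [Finite α] {σ : Perm α} {s : Set α}
    (hs : ∀ x, σ x ∈ s ↔ x ∈ s) (hσ : σ ^ p = 1) (hfix : ∀ x ∈ s, σ x ≠ x) : p ∣ s.ncard := by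
  classical
  have := Fintype.ofFinite α
  rw [← Nat.card_coe_set_eq, Nat.card_eq_fintype_card]
  refine prime_dvd_card_of_pow_eq_one_of_forall_ne (σ := σ.subtypePerm hs) ?_ ?_
  · ext x; simp [hσ]
  · exact fun x hx => hfix x x.2 (congrArg Subtype.val hx)

end Equiv.Perm

section Weight

variable {ι K : Type*} [Fintype ι] [Zero K] [DecidableEq K]

theorem hammingNorm_comp_perm (π : Equiv.Perm ι) (v : ι → K) :
    hammingNorm (v ∘ π) = hammingNorm v :=
  Finset.card_equiv π (by simp)

theorem hammingNorm_eq_ncard (v : ι → K) : hammingNorm v = {i | v i ≠ 0}.ncard := by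
  rw [hammingNorm, ← Set.ncard_coe_finset]; simp

variable {p : ℕ} [Fact p.Prime] {π : Equiv.Perm ι}

theorem prime_dvd_hammingNorm_of_comp_eq (hπ : π ^ p = 1) (hfix : ∀ x, π x ≠ x)
    {v : ι → K} (hv : v ∘ π = v) : p ∣ hammingNorm v := by
  rw [hammingNorm_eq_ncard]
  refine Equiv.Perm.prime_dvd_ncard_of_pow_eq_one_of_forall_ne (fun i => ?_) hπ fun i _ => hfix i
  rw [Set.mem_ofPred_eq, ← Function.comp_apply (f := v), hv, Set.mem_ofPred_eq]

theorem prime_dvd_ncard_weight_of_comp_mem_iff [Finite K] (hπ : π ^ p = 1)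
    (hfix : ∀ x, π x ≠ x) {C : Set (ι → K)} (hC : ∀ v, v ∈ C ↔ v ∘ π ∈ C) {i : ℕ}
    (hi : ¬ p ∣ i) : p ∣ {v | v ∈ C ∧ hammingNorm v = i}.ncard := by
  let Φ : Equiv.Perm (ι → K) := MulAction.toPerm (DomMulAct.mk π)
  have hΦ : ∀ v, Φ v = v ∘ π := fun v => rfl
  refine Equiv.Perm.prime_dvd_ncard_of_pow_eq_one_of_forall_ne (σ := Φ) (fun v => ?_) ?_ ?_
  · simp only [Set.mem_ofPred_eq, hΦ, hammingNorm_comp_perm, ← hC]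
  · have hΦp : Φ ^ p = MulAction.toPerm (DomMulAct.mk (π ^ p)) := by
      rw [DomMulAct.mk_pow]; exact (map_pow (MulAction.toPermHom _ (ι → K)) _ _).symm
    rw [hΦp, hπ, DomMulAct.mk_one]; exact map_one (MulAction.toPermHom _ (ι → K))
  · rintro v ⟨-, rfl⟩ hv
    exact hi (prime_dvd_hammingNorm_of_comp_eq hπ hfix hv)

end Weight

section Rotate

open Fin.NatCast

theorem finRotate_pow_apply {n : ℕ} [NeZero n] (k : ℕ) (x : Fin n) :
    (finRotate n ^ k) x = x + k := by
  induction k with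
  | zero => simp
  | succ k ih =>
    rw [pow_succ', Equiv.Perm.mul_apply, ih, finRotate_apply]; push_cast; rw [add_assoc]

theorem finRotate_pow_apply_eq_self_iff {n k : ℕ} (x : Fin n) :
    (finRotate n ^ k) x = x ↔ n ∣ k := by
  have := x.neZero
  rw [finRotate_pow_apply, add_eq_left, Fin.natCast_eq_zero]

theorem finRotate_inv_pow_pow_eq_one (p ℓ : ℕ) : ((finRotate (p * ℓ))⁻¹ ^ ℓ) ^ p = 1 := by
  have h : finRotate (p * ℓ) ^ (ℓ * p) = 1 :=
    Equiv.ext fun x => (finRotate_pow_apply_eq_self_iff x).2 (mul_comm p ℓ ▸ dvd_rfl)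
  rw [← pow_mul, inv_pow, h, inv_one]

theorem finRotate_inv_pow_apply_ne {p ℓ : ℕ} (hp : 1 < p) (x : Fin (p * ℓ)) :
    ((finRotate (p * ℓ))⁻¹ ^ ℓ) x ≠ x := by
  rw [inv_pow, Ne, Equiv.Perm.inv_eq_iff_eq, eq_comm, finRotate_pow_apply_eq_self_iff]
  have hℓ : 0 < ℓ := Nat.pos_of_mul_pos_left (Fin.pos x)
  exact fun h => (lt_mul_left hℓ hp).not_ge (Nat.le_of_dvd hℓ h)

end Rotate

theorem statement12_general (p ℓ : ℕ) (hp : p.Prime)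
    (C : Submodule (ZMod 2) (Fin (p * ℓ) → ZMod 2))
    (hqc : IsQuasiCyclic (ZMod 2) ℓ C) :
    (∀ i : ℕ, ¬ p ∣ i → p ∣ {v | v ∈ C ∧ hammingNorm v = i}.ncard) ∧
    (∀ d : ℕ, HasMinWeight (ZMod 2) C d → ¬ p ∣ d →
      p ∣ {v | v ∈ C ∧ hammingNorm v = d}.ncard) := by
  have := Fact.mk hp
  have key (i : ℕ) (hi : ¬ p ∣ i) : p ∣ {v | v ∈ C ∧ hammingNorm v = i}.ncard :=
    prime_dvd_ncard_weight_of_comp_mem_iff (finRotate_inv_pow_pow_eq_one p ℓ)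
      (finRotate_inv_pow_apply_ne hp.one_lt) (C := (C : Set (Fin (p * ℓ) → ZMod 2))) hqc hi
  exact ⟨key, fun d _ => key d⟩

/-- For a binary `ℓ`-quasi-cyclic self-dual code of length `pℓ` (`p` prime): if `p ∤ i`
then `p ∣ A_i`; in particular `p ∣ A_d` when `d` is the minimum weight and `p ∤ d`. -/
theorem statement12 (p ℓ : ℕ) (hp : p.Prime)
    (C : Submodule (ZMod 2) (Fin (p * ℓ) → ZMod 2))
    (hsd : IsSelfDualCode (ZMod 2) C)
    (hqc : IsQuasiCyclic (ZMod 2) ℓ C) :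
    (∀ i : ℕ, ¬ p ∣ i → p ∣ {v | v ∈ C ∧ hammingNorm v = i}.ncard) ∧
    (∀ d : ℕ, HasMinWeight (ZMod 2) C d → ¬ p ∣ d →
      p ∣ {v | v ∈ C ∧ hammingNorm v = d}.ncard) :=
  statement12_general p ℓ hp C hqc
end
end
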